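/- Combinatorial impossibility lemma: Let M and X be jointly distributed random variables over F₂^n together with an auxiliary finitely-supported random variable C and a ±1-valued value z_out determined by C. Suppose γ ≥ 3. Then it is impossible to simultaneously have: (1) E_C[|E_{M,X|C}[(-1)^{⟨M,X⟩}·z_out]|] ≥ 2^{-γ+2}; (2) Ĥ_∞(M|C) + Ĥ_∞(X|C) ≥ n + 2γ; and (3) I(M;X|C) ≤ 2^{-2γ}. -/

import Mathlib

open Finset

/-- `pr μ A a` is the probability that the random variable `A` takes value `a`
under the finite measure `μ`. -/
noncomputable def pr {Ω α : Type*} [Fintype Ω] [DecidableEq α]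
    (μ : Ω → ℝ) (A : Ω → α) (a : α) : ℝ :=
  ∑ ω ∈ Finset.univ.filter (fun ω => A ω = a), μ ω

/-- Shannon entropy (base 2) of the random variable `A` under measure `μ`. -/
noncomputable def ent {Ω α : Type*} [Fintype Ω] [Fintype α] [DecidableEq α]
    (μ : Ω → ℝ) (A : Ω → α) : ℝ :=
  - ∑ a, pr μ A a * Real.logb 2 (pr μ A a)

/-- Mutual information `I(A;B)` (base 2). -/
noncomputable def mi {Ω α β : Type*} [Fintype Ω] [Fintype α] [Fintype β]
    [DecidableEq α] [DecidableEq β]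
    (μ : Ω → ℝ) (A : Ω → α) (B : Ω → β) : ℝ :=
  ent μ A + ent μ B - ent μ (fun ω => (A ω, B ω))

/-- Conditional mutual information `I(A;B|C)` (base 2). -/
noncomputable def cmi {Ω α β γ : Type*} [Fintype Ω] [Fintype α] [Fintype β] [Fintype γ]
    [DecidableEq α] [DecidableEq β] [DecidableEq γ]
    (μ : Ω → ℝ) (A : Ω → α) (B : Ω → β) (C : Ω → γ) : ℝ :=
  ent μ (fun ω => (A ω, C ω)) + ent μ (fun ω => (B ω, C ω))
    - ent μ (fun ω => ((A ω, B ω), C ω)) - ent μ C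

/-- Entry of the Sylvester Hadamard matrix: `(-1)^{⟨m,x⟩}`. -/
noncomputable def hadamard (n : ℕ) (m x : Fin n → ZMod 2) : ℝ :=
  if (∑ i, m i * x i) = 0 then 1 else -1

/-- Average min-entropy `Ĥ_∞(A|C) = -log₂ E_{c∼C}[max_a Pr[A=a|C=c]]`. -/
noncomputable def avgMinH {Ω α γ : Type*} [Fintype Ω] [Fintype α] [Fintype γ]
    [Nonempty α] [DecidableEq α] [DecidableEq γ]
    (μ : Ω → ℝ) (A : Ω → α) (C : Ω → γ) : ℝ :=
  - Real.logb 2 (∑ c, pr μ C c *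
      Finset.univ.sup' Finset.univ_nonempty
        (fun a => pr μ (fun ω => (A ω, C ω)) (a, c) / pr μ C c))

/-!
Write `J c m x = Pr[C = c, M = m, X = x]` and let `s c m x = P(c) P(m | c) P(x | c)` be the law
under which `M` and `X` are independent given `C`. The correlation is at most
`∑_c |∑_{m,x} s c m x (-1)^{⟨m,x⟩}| + ‖J - s‖₁`.

For the first term, Lindsey's lemma (Parseval for the Hadamard matrix) bounds the summand of `c` by
`√(2^n · max_m P(m, c) · max_x P(x, c))`, and Cauchy–Schwarz over `c` turns the sum into
`√(2^n · 2^{-Ĥ∞(M|C)} · 2^{-Ĥ∞(X|C)}) ≤ 2^{-γ}`. For the second, the Kullback–Leibler divergence of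
`J` from `s` is `I(M;X|C) · ln 2`, so a Pinsker-type inequality gives `‖J - s‖₁ ≤ 2 · 2^{-γ}`.
Altogether the correlation is at most `3 · 2^{-γ} < 2^{-γ+2}`.
-/

section Hadamard

variable {n : ℕ}

lemma sign_add_zmod_two (a b : ZMod 2) :
    (if a + b = 0 then 1 else -1 : ℝ) = (if a = 0 then 1 else -1) * (if b = 0 then 1 else -1) := by
  have h : ∀ z : ZMod 2, z = 0 ∨ z = 1 := by decide
  rcases h a with rfl | rfl <;> rcases h b with rfl | rfl <;> simp +decide

lemma hadamard_comm (m x : Fin n → ZMod 2) : hadamard n m x = hadamard n x m := by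
  simp only [hadamard, mul_comm]

lemma hadamard_add_left (m m' x : Fin n → ZMod 2) :
    hadamard n (m + m') x = hadamard n m x * hadamard n m' x := by
  simp only [hadamard, Pi.add_apply, add_mul, Finset.sum_add_distrib, sign_add_zmod_two]

lemma abs_hadamard (m x : Fin n → ZMod 2) : |hadamard n m x| = 1 := by
  unfold hadamard; split_ifs <;> norm_num

noncomputable def hadamardChar (x : Fin n → ZMod 2) : AddChar (Fin n → ZMod 2) ℝ where
  toFun m := hadamard n m x
  map_zero_eq_one' := by simp [hadamard]
  map_add_eq_mul' m m' := hadamard_add_left m m' x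

lemma hadamardChar_eq_zero_iff (x : Fin n → ZMod 2) : hadamardChar x = 0 ↔ x = 0 := by
  refine ⟨fun h => ?_, fun h => ?_⟩
  · by_contra hx
    obtain ⟨i, hi⟩ := Function.ne_iff.1 hx
    have := DFunLike.congr_fun h (Pi.single i 1)
    simp only [hadamardChar, hadamard, AddChar.coe_mk, Pi.single_apply, ite_mul, one_mul, zero_mul,
      sum_ite_eq', mem_univ, ↓reduceIte, AddChar.zero_apply, ite_eq_left_iff] at this
    exact absurd (this hi) (by norm_num)
  · ext m
    simp [hadamardChar, hadamard, h]

lemma sum_hadamard (x : Fin n → ZMod 2) :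
    ∑ m, hadamard n m x = if x = 0 then 2 ^ n else 0 := by
  classical
  change ∑ m, hadamardChar x m = _
  simp [AddChar.sum_eq_ite, hadamardChar_eq_zero_iff]

lemma sum_hadamard_mul_hadamard (x x' : Fin n → ZMod 2) :
    ∑ m, hadamard n m x * hadamard n m x' = if x = x' then 2 ^ n else 0 := by
  have hsub : x + x' = 0 ↔ x = x' := by
    have key : ∀ a b : ZMod 2, a + b = 0 ↔ a = b := by decide
    simp only [funext_iff, Pi.add_apply, Pi.zero_apply, key]
  simp only [hadamard_comm _ x, hadamard_comm _ x', ← hadamard_add_left]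
  simp only [hadamard_comm (x + x'), sum_hadamard, hsub]

lemma sum_sq_sum_mul_hadamard (g : (Fin n → ZMod 2) → ℝ) :
    ∑ m, (∑ x, g x * hadamard n m x) ^ 2 = 2 ^ n * ∑ x, g x ^ 2 := by
  calc ∑ m, (∑ x, g x * hadamard n m x) ^ 2
      = ∑ x, ∑ x', g x * g x' * ∑ m, hadamard n m x * hadamard n m x' := by
        simp_rw [sq, Finset.sum_mul_sum, Finset.mul_sum]
        rw [Finset.sum_comm]
        refine Finset.sum_congr rfl fun x _ => ?_
        rw [Finset.sum_comm]
        exact Finset.sum_congr rfl fun x' _ => Finset.sum_congr rfl fun m _ => by ring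
    _ = 2 ^ n * ∑ x, g x ^ 2 := by
        simp [sum_hadamard_mul_hadamard, Finset.mul_sum, sq, mul_comm]

lemma sq_sum_sum_mul_hadamard_le (f g : (Fin n → ZMod 2) → ℝ) :
    (∑ m, ∑ x, f m * g x * hadamard n m x) ^ 2 ≤ 2 ^ n * (∑ m, f m ^ 2) * ∑ x, g x ^ 2 := by
  calc (∑ m, ∑ x, f m * g x * hadamard n m x) ^ 2
      = (∑ m, f m * ∑ x, g x * hadamard n m x) ^ 2 := by
        simp only [Finset.mul_sum, mul_assoc]
    _ ≤ (∑ m, f m ^ 2) * ∑ m, (∑ x, g x * hadamard n m x) ^ 2 :=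
        Finset.sum_mul_sq_le_sq_mul_sq _ _ _
    _ = 2 ^ n * (∑ m, f m ^ 2) * ∑ x, g x ^ 2 := by
        rw [sum_sq_sum_mul_hadamard]; ring

end Hadamard

section Pinsker

open Real InformationTheory

lemma sq_sub_one_le_two_mul_klFun {t : ℝ} (h0 : 0 ≤ t) (h1 : t ≤ 1) :
    (t - 1) ^ 2 ≤ 2 * klFun t := by
  have hanti : AntitoneOn (fun t => 2 * klFun t - (t - 1) ^ 2) (Set.Icc 0 1) := by
    refine antitoneOn_of_hasDerivWithinAt_nonpos (convex_Icc 0 1)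
      (by fun_prop) (f' := fun t => 2 * log t - 2 * (t - 1)) (fun s hs => ?_) (fun s hs => ?_)
    · rw [interior_Icc] at hs
      have := ((hasDerivAt_klFun hs.1.ne').const_mul 2).fun_sub
        (((hasDerivAt_id' s).sub_const 1).fun_pow 2)
      refine (this.congr_deriv ?_).hasDerivWithinAt
      ring
    · rw [interior_Icc] at hs
      linarith [log_le_sub_one_of_pos hs.1]
  have := hanti ⟨h0, h1⟩ ⟨zero_le_one, le_rfl⟩ h1
  simp only [klFun_one] at this
  linarith

lemma sq_sub_one_le_two_mul_mul_klFun {t : ℝ} (h1 : 1 ≤ t) :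
    (t - 1) ^ 2 ≤ 2 * t * klFun t := by
  have hmono : MonotoneOn (fun t => 2 * t * klFun t - (t - 1) ^ 2) (Set.Ici 1) := by
    refine monotoneOn_of_hasDerivWithinAt_nonneg (convex_Ici 1)
      (by fun_prop) (f' := fun t => 4 * klFun t) (fun s hs => ?_) (fun s hs => ?_)
    · rw [interior_Ici] at hs
      have := (((hasDerivAt_id' s).const_mul 2).fun_mul
        (hasDerivAt_klFun (by linarith [Set.mem_Ioi.1 hs]))).fun_sub
        (((hasDerivAt_id' s).sub_const 1).fun_pow 2)
      refine (this.congr_deriv ?_).hasDerivWithinAt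
      simp only [klFun]
      ring
    · rw [interior_Ici] at hs
      exact mul_nonneg (by norm_num) (klFun_nonneg (by linarith [Set.mem_Ioi.1 hs]))
  have := hmono Set.self_mem_Ici h1 h1
  simp only [klFun_one] at this
  linarith

lemma sq_sub_one_le_two_mul_add_one_mul_klFun {t : ℝ} (ht : 0 ≤ t) :
    (t - 1) ^ 2 ≤ 2 * (t + 1) * klFun t := by
  have hkl := klFun_nonneg ht
  rcases le_total t 1 with h | h
  · nlinarith [sq_sub_one_le_two_mul_klFun ht h]
  · nlinarith [sq_sub_one_le_two_mul_mul_klFun h]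

lemma mul_klFun_div {x y : ℝ} (hy : y ≠ 0) : y * klFun (x / y) = x * log (x / y) - x + y := by
  rw [klFun]; field_simp; ring

lemma mul_log_div_sub_add_nonneg {x y : ℝ} (hx : 0 ≤ x) (hy : 0 ≤ y) (hxy : y = 0 → x = 0) :
    0 ≤ x * log (x / y) - x + y := by
  rcases hy.eq_or_lt with rfl | hy
  · simp [hxy rfl]
  · rw [← mul_klFun_div hy.ne']
    exact mul_nonneg hy.le (klFun_nonneg (by positivity))

lemma sq_sub_le_two_mul_add_mul {x y : ℝ} (hx : 0 ≤ x) (hy : 0 ≤ y) (hxy : y = 0 → x = 0) :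
    (x - y) ^ 2 ≤ 2 * (x + y) * (x * log (x / y) - x + y) := by
  rcases hy.eq_or_lt with rfl | hy
  · simp [hxy rfl]
  · have key := sq_sub_one_le_two_mul_add_one_mul_klFun (div_nonneg hx hy.le)
    rw [← mul_klFun_div hy.ne']
    calc (x - y) ^ 2 = y ^ 2 * (x / y - 1) ^ 2 := by field_simp
      _ ≤ y ^ 2 * (2 * (x / y + 1) * klFun (x / y)) := by gcongr
      _ = 2 * (x + y) * (y * klFun (x / y)) := by field_simp

variable {ι : Type*} [Fintype ι] {p q : ι → ℝ}

lemma sq_sum_abs_sub_le (hp : ∀ i, 0 ≤ p i) (hq : ∀ i, 0 ≤ q i) (hpq : ∀ i, q i = 0 → p i = 0) :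
    (∑ i, |p i - q i|) ^ 2
      ≤ (∑ i, 2 * (p i + q i)) * ∑ i, (p i * log (p i / q i) - p i + q i) :=
  Finset.sum_sq_le_sum_mul_sum_of_sq_le_mul _
    (fun i _ => by linarith [hp i, hq i])
    (fun i _ => mul_log_div_sub_add_nonneg (hp i) (hq i) (hpq i))
    (fun i _ => by rw [sq_abs]; exact sq_sub_le_two_mul_add_mul (hp i) (hq i) (hpq i))

lemma sum_abs_sub_le_two_mul_sqrt (hp : ∀ i, 0 ≤ p i) (hq : ∀ i, 0 ≤ q i)
    (hpq : ∀ i, q i = 0 → p i = 0) (hp1 : ∑ i, p i = 1) (hq1 : ∑ i, q i = 1) :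
    ∑ i, |p i - q i| ≤ 2 * √(∑ i, p i * log (p i / q i)) := by
  have h := sq_sum_abs_sub_le hp hq hpq
  simp only [Finset.sum_add_distrib, Finset.sum_sub_distrib, ← Finset.mul_sum, hp1, hq1] at h
  rw [show 2 * √(∑ i, p i * log (p i / q i)) = √(4 * ∑ i, p i * log (p i / q i)) by
    rw [Real.sqrt_mul (by norm_num), show (4 : ℝ) = 2 ^ 2 by norm_num, Real.sqrt_sq zero_le_two]]
  exact Real.le_sqrt_of_sq_le (by linarith)

end Pinsker

section JointLaw

open Real

lemma sum_sq_le_sup'_mul_sum {ι : Type*} [Fintype ι] [Nonempty ι] {f : ι → ℝ}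
    (hf : ∀ i, 0 ≤ f i) : ∑ i, f i ^ 2 ≤ univ.sup' univ_nonempty f * ∑ i, f i := by
  rw [Finset.mul_sum]
  exact Finset.sum_le_sum fun i hi => by
    rw [sq]; exact mul_le_mul_of_nonneg_right (le_sup' f hi) (hf i)

variable {α β γ : Type*} [Fintype α] [Fintype β]

/-- The law `P(c) P(m | c) P(x | c)` under which `m` and `x` are independent given `c`. -/
noncomputable def condIndepLaw (J : γ → α → β → ℝ) (c : γ) (m : α) (x : β) : ℝ :=
  (∑ x', J c m x') * (∑ m', J c m' x) / ∑ m', ∑ x', J c m' x'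

variable {J : γ → α → β → ℝ}

lemma condIndepLaw_nonneg (hJ : ∀ c m x, 0 ≤ J c m x) (c : γ) (m : α) (x : β) :
    0 ≤ condIndepLaw J c m x := by
  unfold condIndepLaw
  exact div_nonneg
    (mul_nonneg (Finset.sum_nonneg fun _ _ => hJ ..) (Finset.sum_nonneg fun _ _ => hJ ..))
    (Finset.sum_nonneg fun _ _ => Finset.sum_nonneg fun _ _ => hJ ..)

lemma sum_sum_condIndepLaw (c : γ) :
    ∑ m, ∑ x, condIndepLaw J c m x = ∑ m, ∑ x, J c m x := by
  simp only [condIndepLaw, ← Finset.sum_div, ← Finset.mul_sum, ← Finset.sum_mul]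
  rw [Finset.sum_comm (f := fun x m => J c m x)]
  rcases eq_or_ne (∑ m, ∑ x, J c m x) 0 with h | h
  · rw [h, div_zero]
  · field_simp

lemma condIndepLaw_pos (hJ : ∀ c m x, 0 ≤ J c m x) {c : γ} {m : α} {x : β}
    (h : 0 < J c m x) : 0 < condIndepLaw J c m x := by
  have hP : J c m x ≤ ∑ x', J c m x' :=
    Finset.single_le_sum (fun x' _ => hJ c m x') (mem_univ x)
  have hQ : J c m x ≤ ∑ m', J c m' x :=
    Finset.single_le_sum (fun m' _ => hJ c m' x) (mem_univ m)
  have hw : ∑ x', J c m x' ≤ ∑ m', ∑ x', J c m' x' :=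
    Finset.single_le_sum (fun m' _ => Finset.sum_nonneg fun x' _ => hJ c m' x') (mem_univ m)
  unfold condIndepLaw
  have hP' := h.trans_le hP
  exact div_pos (mul_pos hP' (h.trans_le hQ)) (hP'.trans_le hw)

lemma abs_sum_condIndepLaw_mul_hadamard_le {n : ℕ}
    {J : γ → (Fin n → ZMod 2) → (Fin n → ZMod 2) → ℝ} (hJ : ∀ c m x, 0 ≤ J c m x) (c : γ) :
    |∑ m, ∑ x, condIndepLaw J c m x * hadamard n m x|
      ≤ √(2 ^ n * univ.sup' univ_nonempty (fun m => ∑ x, J c m x)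
          * univ.sup' univ_nonempty (fun x => ∑ m, J c m x)) := by
  set P := fun m => ∑ x, J c m x
  set Q := fun x => ∑ m, J c m x
  set w := ∑ m, ∑ x, J c m x
  have hP (m) : 0 ≤ P m := Finset.sum_nonneg fun x _ => hJ c m x
  have hQ (x) : 0 ≤ Q x := Finset.sum_nonneg fun m _ => hJ c m x
  have hQw : ∑ x, Q x = w := Finset.sum_comm
  have hw : 0 ≤ w := Finset.sum_nonneg fun m _ => hP m
  have hsupP : 0 ≤ univ.sup' univ_nonempty P := (hP 0).trans (le_sup' P (mem_univ 0))
  have hsupQ : 0 ≤ univ.sup' univ_nonempty Q := (hQ 0).trans (le_sup' Q (mem_univ 0))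
  have hsum : ∑ m, ∑ x, condIndepLaw J c m x * hadamard n m x
      = (∑ m, ∑ x, P m * Q x * hadamard n m x) / w := by
    simp only [condIndepLaw, Finset.sum_div, div_mul_eq_mul_div]
    rfl
  have hsq : (∑ m, ∑ x, P m * Q x * hadamard n m x) ^ 2
      ≤ 2 ^ n * univ.sup' univ_nonempty P * univ.sup' univ_nonempty Q * w ^ 2 :=
    calc (∑ m, ∑ x, P m * Q x * hadamard n m x) ^ 2
        ≤ 2 ^ n * (∑ m, P m ^ 2) * ∑ x, Q x ^ 2 := sq_sum_sum_mul_hadamard_le P Q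
      _ ≤ 2 ^ n * (univ.sup' univ_nonempty P * w) * (univ.sup' univ_nonempty Q * w) := by
        gcongr
        · exact sum_sq_le_sup'_mul_sum hP
        · rw [← hQw]; exact sum_sq_le_sup'_mul_sum hQ
      _ = 2 ^ n * univ.sup' univ_nonempty P * univ.sup' univ_nonempty Q * w ^ 2 := by ring
  rw [hsum, abs_div, abs_of_nonneg hw]
  refine div_le_of_le_mul₀ hw (sqrt_nonneg _) ?_
  calc |∑ m, ∑ x, P m * Q x * hadamard n m x|
      ≤ √(2 ^ n * univ.sup' univ_nonempty P * univ.sup' univ_nonempty Q * w ^ 2) :=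
        abs_le_sqrt hsq
    _ = √(2 ^ n * univ.sup' univ_nonempty P * univ.sup' univ_nonempty Q) * w := by
        rw [sqrt_mul (by positivity), sqrt_sq hw]

lemma sum_abs_sum_condIndepLaw_mul_hadamard_le [Fintype γ] {n : ℕ}
    {J : γ → (Fin n → ZMod 2) → (Fin n → ZMod 2) → ℝ} (hJ : ∀ c m x, 0 ≤ J c m x) :
    ∑ c, |∑ m, ∑ x, condIndepLaw J c m x * hadamard n m x|
      ≤ √(2 ^ n * (∑ c, univ.sup' univ_nonempty (fun m => ∑ x, J c m x))
          * ∑ c, univ.sup' univ_nonempty (fun x => ∑ m, J c m x)) := by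
  set a := fun c => univ.sup' univ_nonempty (fun m => ∑ x, J c m x)
  set b := fun c => univ.sup' univ_nonempty (fun x => ∑ m, J c m x)
  have ha (c : γ) : 0 ≤ 2 ^ n * a c :=
    mul_nonneg (by positivity) (le_sup'_of_le _ (mem_univ 0) (Finset.sum_nonneg fun x _ => hJ ..))
  have hb (c : γ) : 0 ≤ b c := le_sup'_of_le _ (mem_univ 0) (Finset.sum_nonneg fun m _ => hJ ..)
  calc ∑ c, |∑ m, ∑ x, condIndepLaw J c m x * hadamard n m x| ≤ ∑ c, √(2 ^ n * a c) * √(b c) :=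
        Finset.sum_le_sum fun c _ => by
          rw [← sqrt_mul (ha c)]; exact abs_sum_condIndepLaw_mul_hadamard_le hJ c
    _ ≤ √(∑ c, 2 ^ n * a c) * √(∑ c, b c) := sum_sqrt_mul_sqrt_le _ ha hb
    _ = √(2 ^ n * (∑ c, a c) * ∑ c, b c) := by
        rw [← sqrt_mul (Finset.sum_nonneg fun c _ => ha c), ← Finset.mul_sum]

lemma sum_abs_sub_condIndepLaw_le [Fintype γ] (hJ : ∀ c m x, 0 ≤ J c m x)
    (hJ1 : ∑ c, ∑ m, ∑ x, J c m x = 1) :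
    ∑ c, ∑ m, ∑ x, |J c m x - condIndepLaw J c m x|
      ≤ 2 * √(∑ c, ∑ m, ∑ x, J c m x * log (J c m x / condIndepLaw J c m x)) := by
  have hs0 (i : γ × α × β) (h : condIndepLaw J i.1 i.2.1 i.2.2 = 0) : J i.1 i.2.1 i.2.2 = 0 :=
    (hJ ..).eq_or_lt.elim Eq.symm fun hpos => absurd h (condIndepLaw_pos hJ hpos).ne'
  have := sum_abs_sub_le_two_mul_sqrt (p := fun i : γ × α × β => J i.1 i.2.1 i.2.2)
    (q := fun i => condIndepLaw J i.1 i.2.1 i.2.2) (fun _ => hJ ..)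
    (fun _ => condIndepLaw_nonneg hJ ..) hs0
    (by simpa only [Fintype.sum_prod_type] using hJ1)
    (by simpa only [Fintype.sum_prod_type, sum_sum_condIndepLaw] using hJ1)
  simpa only [Fintype.sum_prod_type] using this

lemma abs_sum_mul_hadamard_le_add {n : ℕ} (J K : (Fin n → ZMod 2) → (Fin n → ZMod 2) → ℝ) :
    |∑ m, ∑ x, J m x * hadamard n m x|
      ≤ |∑ m, ∑ x, K m x * hadamard n m x| + ∑ m, ∑ x, |J m x - K m x| := by
  rw [← sub_add_cancel (∑ m, ∑ x, J m x * hadamard n m x) (∑ m, ∑ x, K m x * hadamard n m x),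
    add_comm]
  refine (abs_add_le _ _).trans (add_le_add_right ?_ _)
  simp only [← Finset.sum_sub_distrib, ← sub_mul]
  refine (Finset.abs_sum_le_sum_abs _ _).trans (Finset.sum_le_sum fun m _ => ?_)
  refine (Finset.abs_sum_le_sum_abs _ _).trans (le_of_eq (Finset.sum_congr rfl fun x _ => ?_))
  rw [abs_mul, abs_hadamard, mul_one]

theorem sum_abs_sum_mul_hadamard_le [Fintype γ] {n : ℕ}
    {J : γ → (Fin n → ZMod 2) → (Fin n → ZMod 2) → ℝ} (hJ : ∀ c m x, 0 ≤ J c m x)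
    (hJ1 : ∑ c, ∑ m, ∑ x, J c m x = 1) :
    ∑ c, |∑ m, ∑ x, J c m x * hadamard n m x|
      ≤ √(2 ^ n * (∑ c, univ.sup' univ_nonempty (fun m => ∑ x, J c m x))
          * ∑ c, univ.sup' univ_nonempty (fun x => ∑ m, J c m x))
        + 2 * √(∑ c, ∑ m, ∑ x, J c m x * log (J c m x / condIndepLaw J c m x)) :=
  calc ∑ c, |∑ m, ∑ x, J c m x * hadamard n m x|
      ≤ ∑ c, (|∑ m, ∑ x, condIndepLaw J c m x * hadamard n m x|
          + ∑ m, ∑ x, |J c m x - condIndepLaw J c m x|) :=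
        Finset.sum_le_sum fun c _ => abs_sum_mul_hadamard_le_add (J c) (condIndepLaw J c)
    _ ≤ _ := by
        rw [Finset.sum_add_distrib]
        exact add_le_add (sum_abs_sum_condIndepLaw_mul_hadamard_le hJ)
          (sum_abs_sub_condIndepLaw_le hJ hJ1)

end JointLaw

section Probability

open Real

variable {Ω α β γ : Type*} [Fintype Ω] {μ : Ω → ℝ}

lemma pr_nonneg [DecidableEq α] (hμ : ∀ ω, 0 ≤ μ ω) (A : Ω → α) (a : α) : 0 ≤ pr μ A a :=
  Finset.sum_nonneg fun ω _ => hμ ω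

lemma sum_pr [Fintype α] [DecidableEq α] (A : Ω → α) : ∑ a, pr μ A a = ∑ ω, μ ω :=
  Finset.sum_fiberwise univ A μ

lemma sum_mul_eq_sum_pr_mul [Fintype α] [DecidableEq α] (A : Ω → α) (g : α → ℝ) :
    ∑ ω, μ ω * g (A ω) = ∑ a, pr μ A a * g a := by
  rw [← Finset.sum_fiberwise univ A]
  refine Finset.sum_congr rfl fun a _ => ?_
  rw [pr, Finset.sum_mul]
  exact Finset.sum_congr rfl fun ω hω => by rw [(mem_filter.1 hω).2]

lemma pr_comp [Fintype α] [DecidableEq α] [DecidableEq β] (Z : Ω → α) (f : α → β) (b : β) :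
    pr μ (fun ω => f (Z ω)) b = ∑ z ∈ univ.filter (fun z => f z = b), pr μ Z z := by
  have h := sum_mul_eq_sum_pr_mul (μ := μ) Z (fun z => if f z = b then 1 else 0)
  simp only [mul_boole, ← Finset.sum_filter] at h
  exact h

lemma pr_le_pr_comp [Fintype α] [DecidableEq α] [DecidableEq β] (hμ : ∀ ω, 0 ≤ μ ω)
    (Z : Ω → α) (f : α → β) (z : α) : pr μ Z z ≤ pr μ (fun ω => f (Z ω)) (f z) := by
  rw [pr_comp Z f (f z)]
  exact Finset.single_le_sum (fun z' _ => pr_nonneg hμ Z z') (mem_filter.2 ⟨mem_univ z, rfl⟩)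

lemma ent_comp [Fintype α] [Fintype β] [DecidableEq α] [DecidableEq β] (Z : Ω → α) (f : α → β) :
    ent μ (fun ω => f (Z ω)) = -∑ z, pr μ Z z * logb 2 (pr μ (fun ω => f (Z ω)) (f z)) := by
  rw [ent, ← Finset.sum_fiberwise univ f]
  congr 1
  refine Finset.sum_congr rfl fun b _ => ?_
  nth_rewrite 1 [pr_comp Z f b]
  rw [Finset.sum_mul]
  exact Finset.sum_congr rfl fun z hz => by rw [(mem_filter.1 hz).2]

section GuessProb

variable [Fintype α] [Nonempty α] [DecidableEq α] [Fintype γ] [DecidableEq γ]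

/-- The guessing probability `E_c [max_a Pr[A = a | C = c]]`. -/
noncomputable def guessProb (μ : Ω → ℝ) (A : Ω → α) (C : Ω → γ) : ℝ :=
  ∑ c, univ.sup' univ_nonempty fun a => pr μ (fun ω => (A ω, C ω)) (a, c)

variable (A : Ω → α) (C : Ω → γ)

lemma avgMinH_eq_neg_logb_guessProb (hμ : ∀ ω, 0 ≤ μ ω) :
    avgMinH μ A C = -logb 2 (guessProb μ A C) := by
  rw [avgMinH, guessProb]
  congr 2
  refine Finset.sum_congr rfl fun c _ => ?_
  rw [mul₀_sup' (pr_nonneg hμ C c)]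
  refine Finset.sup'_congr _ rfl fun a _ => ?_
  rcases (pr_nonneg hμ C c).eq_or_lt with h | h
  · have hle := pr_le_pr_comp hμ (fun ω => (A ω, C ω)) Prod.snd (a, c)
    rw [← h] at hle ⊢
    rw [zero_mul]
    exact (hle.antisymm (pr_nonneg hμ _ _)).symm
  · exact mul_div_cancel₀ _ h.ne'

lemma one_le_card_mul_guessProb (hsum : ∑ ω, μ ω = 1) :
    1 ≤ Fintype.card α * guessProb μ A C := by
  rw [← hsum, ← sum_pr (fun ω => (A ω, C ω)), Fintype.sum_prod_type, Finset.sum_comm, guessProb,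
    Finset.mul_sum]
  refine Finset.sum_le_sum fun c _ => ?_
  rw [← nsmul_eq_mul]
  exact Finset.sum_le_card_nsmul _ _ _ fun a _ => le_sup' (fun a => pr μ _ (a, c)) (mem_univ a)

lemma guessProb_mul_guessProb_le {B : Ω → β} [Fintype β] [Nonempty β] [DecidableEq β]
    (hμ : ∀ ω, 0 ≤ μ ω) (hsum : ∑ ω, μ ω = 1) {k : ℝ}
    (h : k ≤ avgMinH μ A C + avgMinH μ B C) : guessProb μ A C * guessProb μ B C ≤ 2 ^ (-k) := by
  have hA := pos_of_mul_pos_right (one_pos.trans_le (one_le_card_mul_guessProb A C hsum))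
    (Nat.cast_nonneg _)
  have hB := pos_of_mul_pos_right (one_pos.trans_le (one_le_card_mul_guessProb B C hsum))
    (Nat.cast_nonneg _)
  rw [avgMinH_eq_neg_logb_guessProb A C hμ, avgMinH_eq_neg_logb_guessProb B C hμ] at h
  rw [← logb_le_iff_le_rpow one_lt_two (mul_pos hA hB), logb_mul hA.ne' hB.ne']
  linarith

end GuessProb

variable [Fintype α] [Fintype β] [Fintype γ] [DecidableEq α] [DecidableEq β] [DecidableEq γ]

noncomputable def jointLaw (μ : Ω → ℝ) (M : Ω → α) (X : Ω → β) (C : Ω → γ)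
    (c : γ) (m : α) (x : β) : ℝ :=
  pr μ (fun ω => ((M ω, X ω), C ω)) ((m, x), c)

variable (μ) (M : Ω → α) (X : Ω → β) (C : Ω → γ)

lemma sum_jointLaw_right (c : γ) (m : α) :
    ∑ x, jointLaw μ M X C c m x = pr μ (fun ω => (M ω, C ω)) (m, c) := by
  rw [pr_comp (fun ω => ((M ω, X ω), C ω)) (fun z => (z.1.1, z.2))]
  simp only [jointLaw, Prod.mk.injEq, sum_filter, ite_and, Fintype.sum_prod_type, sum_ite_irrel,
    sum_ite_eq', mem_univ, ↓reduceIte, sum_const_zero]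
  rw [Finset.sum_comm]
  simp only [sum_ite_eq', mem_univ, ↓reduceIte]

lemma sum_jointLaw_left (c : γ) (x : β) :
    ∑ m, jointLaw μ M X C c m x = pr μ (fun ω => (X ω, C ω)) (x, c) := by
  rw [pr_comp (fun ω => ((M ω, X ω), C ω)) (fun z => (z.1.2, z.2))]
  simp [jointLaw, Finset.sum_filter, Fintype.sum_prod_type, ite_and]

lemma sum_sum_jointLaw (c : γ) : ∑ m, ∑ x, jointLaw μ M X C c m x = pr μ C c := by
  rw [pr_comp (fun ω => ((M ω, X ω), C ω)) Prod.snd]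
  simp [jointLaw, Finset.sum_filter, Fintype.sum_prod_type]

lemma sum_filter_mul_eq_sum_jointLaw (c : γ) (g : α → β → ℝ) :
    ∑ ω ∈ univ.filter (fun ω => C ω = c), μ ω * g (M ω) (X ω)
      = ∑ m, ∑ x, jointLaw μ M X C c m x * g m x := by
  have h := sum_mul_eq_sum_pr_mul (μ := μ) (fun ω => ((M ω, X ω), C ω))
    (fun z => if z.2 = c then g z.1.1 z.1.2 else 0)
  simp only [mul_ite, mul_zero, ← Finset.sum_filter] at h
  rw [h, Finset.sum_filter, Fintype.sum_prod_type, Fintype.sum_prod_type]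
  simp [jointLaw]

lemma pr_mul_abs_div_le (hμ : ∀ ω, 0 ≤ μ ω) (c : γ) (g : α → β → ℝ) {z : ℝ} (hz : |z| ≤ 1) :
    pr μ C c * |(∑ ω ∈ univ.filter (fun ω => C ω = c), μ ω * g (M ω) (X ω) * z) / pr μ C c|
      ≤ |∑ m, ∑ x, jointLaw μ M X C c m x * g m x| := by
  rw [← Finset.sum_mul, sum_filter_mul_eq_sum_jointLaw, abs_div, abs_mul,
    abs_of_nonneg (pr_nonneg hμ C c)]
  rcases (pr_nonneg hμ C c).eq_or_lt with h | h
  · rw [← h, zero_mul]; exact abs_nonneg _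
  · rw [mul_div_cancel₀ _ h.ne']
    exact mul_le_of_le_one_right (abs_nonneg _) hz

lemma mul_log_div_mul_div {j p q w : ℝ} (hj : 0 ≤ j) (hp : j ≤ p) (hq : j ≤ q) (hw : j ≤ w) :
    j * log (j / (p * q / w)) = j * (log j + log w - log p - log q) := by
  rcases hj.eq_or_lt with rfl | hj
  · simp
  have hp := hj.trans_le hp
  have hq := hj.trans_le hq
  have hw := hj.trans_le hw
  rw [log_div hj.ne' (by positivity), log_div (by positivity) hw.ne', log_mul hp.ne' hq.ne']
  ring

lemma cmi_mul_log_two (hμ : ∀ ω, 0 ≤ μ ω) :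
    cmi μ M X C * log 2 = ∑ c, ∑ m, ∑ x, jointLaw μ M X C c m x
      * log (jointLaw μ M X C c m x / condIndepLaw (jointLaw μ M X C) c m x) := by
  set Z := fun ω => ((M ω, X ω), C ω)
  simp only [condIndepLaw, sum_sum_jointLaw]
  simp only [sum_jointLaw_right, sum_jointLaw_left]
  calc cmi μ M X C * log 2
      = ∑ z, pr μ Z z * (log (pr μ Z z) + log (pr μ C z.2)
          - log (pr μ (fun ω => (M ω, C ω)) (z.1.1, z.2))
          - log (pr μ (fun ω => (X ω, C ω)) (z.1.2, z.2))) := by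
        rw [cmi, ent_comp Z (fun z => (z.1.1, z.2)), ent_comp Z (fun z => (z.1.2, z.2)),
          ent_comp Z Prod.snd, ent]
        simp only [logb, ← Finset.sum_neg_distrib, ← Finset.sum_sub_distrib,
          ← Finset.sum_add_distrib, Finset.sum_mul]
        refine Finset.sum_congr rfl fun z _ => ?_
        field_simp
        ring
    _ = ∑ z, pr μ Z z * log (pr μ Z z / (pr μ (fun ω => (M ω, C ω)) (z.1.1, z.2)
          * pr μ (fun ω => (X ω, C ω)) (z.1.2, z.2) / pr μ C z.2)) :=
        Finset.sum_congr rfl fun z _ => (mul_log_div_mul_div (pr_nonneg hμ Z z)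
          (pr_le_pr_comp hμ Z (fun z => (z.1.1, z.2)) z)
          (pr_le_pr_comp hμ Z (fun z => (z.1.2, z.2)) z)
          (pr_le_pr_comp hμ Z Prod.snd z)).symm
    _ = _ := by
      rw [Fintype.sum_prod_type_right]
      simp only [Fintype.sum_prod_type]
      rfl

lemma guessProb_fst_eq_sum_sup'_jointLaw [Nonempty α] :
    guessProb μ M C = ∑ c, univ.sup' univ_nonempty fun m => ∑ x, jointLaw μ M X C c m x := by
  simp only [guessProb, sum_jointLaw_right]

lemma guessProb_snd_eq_sum_sup'_jointLaw [Nonempty β] :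
    guessProb μ X C = ∑ c, univ.sup' univ_nonempty fun x => ∑ m, jointLaw μ M X C c m x := by
  simp only [guessProb, sum_jointLaw_left]

lemma sum_jointLaw_mul_log_le_of_cmi_le (hμ : ∀ ω, 0 ≤ μ ω) {t : ℝ} (ht : 0 ≤ t)
    (h : cmi μ M X C ≤ t) :
    ∑ c, ∑ m, ∑ x, jointLaw μ M X C c m x
      * log (jointLaw μ M X C c m x / condIndepLaw (jointLaw μ M X C) c m x) ≤ t := by
  rw [← cmi_mul_log_two μ M X C hμ]
  calc cmi μ M X C * log 2 ≤ t * log 2 := mul_le_mul_of_nonneg_right h (log_nonneg one_le_two)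
    _ ≤ t := mul_le_of_le_one_right ht ((log_le_sub_one_of_pos two_pos).trans (by norm_num))

end Probability

lemma sqrt_two_rpow_neg_two_mul (γ : ℝ) : √((2 : ℝ) ^ (-(2 * γ))) = 2 ^ (-γ) := by
  rw [show -(2 * γ) = -γ * 2 by ring, Real.rpow_mul zero_le_two, Real.rpow_two,
    Real.sqrt_sq (by positivity)]

theorem stmt13_general {Ω γty : Type*} [Fintype Ω] [Fintype γty] [DecidableEq γty] {n : ℕ}
    (μ : Ω → ℝ) (hμ : ∀ ω, 0 ≤ μ ω) (hsum : ∑ ω, μ ω = 1)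
    (M X : Ω → (Fin n → ZMod 2)) (C : Ω → γty)
    (zout : γty → ℝ) (hz : ∀ c, zout c = 1 ∨ zout c = -1)
    (γ : ℝ)
    (hadv : (2 : ℝ) ^ (-γ + 2) ≤ ∑ c, pr μ C c *
        |(∑ ω ∈ Finset.univ.filter (fun ω => C ω = c),
            μ ω * hadamard n (M ω) (X ω) * zout c) / pr μ C c|)
    (hminent : (n : ℝ) + 2 * γ ≤ avgMinH μ M C + avgMinH μ X C)
    (hcmi : cmi μ M X C ≤ (2 : ℝ) ^ (-(2 * γ))) :
    False := by
  set J := jointLaw μ M X C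
  have hJ (c m x) : 0 ≤ J c m x := pr_nonneg hμ _ _
  have hJ1 : ∑ c, ∑ m, ∑ x, J c m x = 1 := by simp only [J, sum_sum_jointLaw, sum_pr, hsum]
  have hcorr : 2 ^ (-γ + 2) ≤ ∑ c, |∑ m, ∑ x, J c m x * hadamard n m x| :=
    hadv.trans <| Finset.sum_le_sum fun c _ =>
      pr_mul_abs_div_le μ M X C hμ c _ (by rcases hz c with h | h <;> simp [h])
  have hguess : 2 ^ n * guessProb μ M C * guessProb μ X C ≤ 2 ^ (-(2 * γ)) :=
    calc _ ≤ (2 : ℝ) ^ n * 2 ^ (-(n + 2 * γ)) := by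
          rw [mul_assoc]; gcongr; exact guessProb_mul_guessProb_le M C hμ hsum hminent
      _ = 2 ^ (-(2 * γ)) := by rw [← Real.rpow_natCast, ← Real.rpow_add two_pos]; ring_nf
  have hkl := sum_jointLaw_mul_log_le_of_cmi_le μ M X C hμ (by positivity) hcmi
  have hcore := sum_abs_sum_mul_hadamard_le hJ hJ1
  rw [← guessProb_fst_eq_sum_sup'_jointLaw, ← guessProb_snd_eq_sum_sup'_jointLaw] at hcore
  have hpow : (2 : ℝ) ^ (-γ + 2) = 4 * 2 ^ (-γ) := by rw [Real.rpow_add two_pos]; norm_num; ring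
  have := (hcorr.trans hcore).trans (add_le_add (Real.sqrt_le_sqrt hguess)
    (mul_le_mul_of_nonneg_left (Real.sqrt_le_sqrt hkl) two_pos.le))
  rw [sqrt_two_rpow_neg_two_mul, hpow] at this
  linarith [(by positivity : (0 : ℝ) < 2 ^ (-γ))]

/-- Combinatorial impossibility lemma: no auxiliary variable `C` (with a ±1 output
`zout` determined by `C`) can simultaneously give good advantage, large average
min-entropy, and low conditional mutual information. -/
theorem stmt13 {Ω γty : Type*} [Fintype Ω] [Fintype γty] [DecidableEq γty] {n : ℕ}
    (μ : Ω → ℝ) (hμ : ∀ ω, 0 ≤ μ ω) (hsum : ∑ ω, μ ω = 1)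
    (M X : Ω → (Fin n → ZMod 2)) (C : Ω → γty)
    (zout : γty → ℝ) (hz : ∀ c, zout c = 1 ∨ zout c = -1)
    (γ : ℝ) (hγ : 3 ≤ γ)
    (hadv : (2 : ℝ) ^ (-γ + 2) ≤ ∑ c, pr μ C c *
        |(∑ ω ∈ Finset.univ.filter (fun ω => C ω = c),
            μ ω * hadamard n (M ω) (X ω) * zout c) / pr μ C c|)
    (hminent : (n : ℝ) + 2 * γ ≤ avgMinH μ M C + avgMinH μ X C)
    (hcmi : cmi μ M X C ≤ (2 : ℝ) ^ (-(2 * γ))) :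
    False :=
  stmt13_general μ hμ hsum M X C zout hz γ hadv hminent hcmi
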